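/- If K ∈ Γ̃_{1,p} has first row equal to (1,0,0,0), then there exists a matrix [[a,b],[c,d]] ∈ Γ₁(p) such that K has the form [[1,0,0,0],[∗,a,0,c],[∗,∗,1,∗],[∗,b,0,d]]; in particular the entries (2,3), (4,3) of K vanish, entry (3,3) equals 1, and the 2×2 matrix formed by entries (2,2),(4,2) (first column) and (2,4),(4,4) (second column) is [[a,c],[b,d]] with [[a,b],[c,d]] ∈ Γ₁(p). -/
import Mathlib


open Matrix

/-- The symplectic form `Λ` over `ℤ`. -/
def LambdaZ (p : ℕ) : Matrix (Fin 4) (Fin 4) ℤ :=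
  !![0,0,1,0; 0,0,0,(p:ℤ); -1,0,0,0; 0,-(p:ℤ),0,0]

/-- Membership in `Γ̃_{1,p} ⊆ Sp(Λ,ℤ)`: `γ Λ γᵀ = Λ`, second row `≡ (0,1,0,0)` and fourth
row `≡ (0,0,0,1)` mod `p`. -/
def TildeGammaMem (p : ℕ) (γ : Matrix (Fin 4) (Fin 4) ℤ) : Prop :=
  γ * LambdaZ p * γ.transpose = LambdaZ p ∧
  (p : ℤ) ∣ γ 1 0 ∧ (p : ℤ) ∣ (γ 1 1 - 1) ∧ (p : ℤ) ∣ γ 1 2 ∧ (p : ℤ) ∣ γ 1 3 ∧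
  (p : ℤ) ∣ γ 3 0 ∧ (p : ℤ) ∣ γ 3 1 ∧ (p : ℤ) ∣ γ 3 2 ∧ (p : ℤ) ∣ (γ 3 3 - 1)

/-- A vector `v ∈ ℤ⁴` is short (w.r.t. `Λ`) if `v Λ wᵀ = 1` for some `w ∈ ℤ⁴`. -/
def IsShort (p : ℕ) (v : Fin 4 → ℤ) : Prop :=
  ∃ w : Fin 4 → ℤ, v ⬝ᵥ (LambdaZ p).mulVec w = 1

/-- Membership in `Γ₁(p) ⊆ SL(2,ℤ)`: determinant 1 and congruent to the identity mod `p`. -/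
def Gamma1Mem (p : ℕ) (A : Matrix (Fin 2) (Fin 2) ℤ) : Prop :=
  A.det = 1 ∧ (p : ℤ) ∣ (A 0 0 - 1) ∧ (p : ℤ) ∣ A 0 1 ∧
    (p : ℤ) ∣ A 1 0 ∧ (p : ℤ) ∣ (A 1 1 - 1)

/-- if `K ∈ Γ̃_{1,p}` has first row `(1,0,0,0)` then `K` has the shape
`[[1,0,0,0],[∗,a,0,c],[∗,∗,1,∗],[∗,b,0,d]]` for some `[[a,b],[c,d]] ∈ Γ₁(p)`. -/
theorem statement5 (p : ℕ) (hp : p.Prime) (hodd : Odd p)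
    (K : Matrix (Fin 4) (Fin 4) ℤ) (hK : TildeGammaMem p K)
    (hrow : K 0 = ![1, 0, 0, 0]) :
    ∃ a b c d : ℤ, Gamma1Mem p !![a, b; c, d] ∧
      K 1 2 = 0 ∧ K 3 2 = 0 ∧ K 2 2 = 1 ∧
      K 1 1 = a ∧ K 3 1 = b ∧ K 1 3 = c ∧ K 3 3 = d := by
  obtain ⟨hsymp, _, h11, _, h13, h30, h31, _, h33⟩ := hK
  have h00 : K 0 0 = 1 := by rw [hrow]; rfl
  have h01 : K 0 1 = 0 := by rw [hrow]; rfl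
  have h02 : K 0 2 = 0 := by rw [hrow]; rfl
  have h03 : K 0 3 = 0 := by rw [hrow]; rfl
  have e01 := congrFun (congrFun hsymp 0) 1
  have e02 := congrFun (congrFun hsymp 0) 2
  have e03 := congrFun (congrFun hsymp 0) 3
  have e13 := congrFun (congrFun hsymp 1) 3
  simp only [LambdaZ, Matrix.mul_apply, Matrix.transpose_apply, Fin.sum_univ_four,
    Matrix.cons_val', Matrix.cons_val_zero, Matrix.cons_val_one, Matrix.head_cons,
    Matrix.empty_val', Matrix.cons_val_fin_one, Matrix.head_fin_const,
    Matrix.cons_val_two, Matrix.cons_val_three, Matrix.tail_cons,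
    Matrix.of_apply, h00, h01, h02, h03] at e01 e02 e03 e13
  have k12 : K 1 2 = 0 := by linarith
  have k32 : K 3 2 = 0 := by linarith
  have k22 : K 2 2 = 1 := by linarith
  have hp0 : (p : ℤ) ≠ 0 := by exact_mod_cast hp.ne_zero
  have hdet : K 1 1 * K 3 3 - K 1 3 * K 3 1 = 1 := by
    rw [k12, k32] at e13
    have : (p:ℤ) * (K 1 1 * K 3 3 - K 1 3 * K 3 1) = (p:ℤ) * 1 := by ring_nf; ring_nf at e13; linarith
    exact mul_left_cancel₀ hp0 this
  refine ⟨K 1 1, K 3 1, K 1 3, K 3 3, ⟨?_, ?_, ?_, ?_, ?_⟩, k12, k32, k22, rfl, rfl, rfl, rfl⟩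
  · simp [Matrix.det_fin_two_of]; linarith
  · simpa using h11
  · simpa using h31
  · simpa using h13
  · simpa using h33
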